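/- arXiv:1601.06849 — 5 statements merged into one kernel-verified Lean document; each statement's English description precedes it below -/
import Mathlib

section
/- If there exists a positive diagonal matrix D (all diagonal entries > 0) such that DC + (DC)ᵗ is positive definite, then every real eigenvalue of C is positive; in particular C is nonsingular. -/
open scoped Matrix

/-- If there is a positive diagonal matrix `D` with `DC + (DC)ᵗ` positive definite,
then every real eigenvalue of `C` is positive; in particular `C` is nonsingular. -/
theorem real_eigenvalues_pos_of_diag_stab
    {ℓ : ℕ} (C D : Matrix (Fin ℓ) (Fin ℓ) ℝ)
    (hDdiag : ∀ i j, i ≠ j → D i j = 0)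
    (hDpos : ∀ i, 0 < D i i)
    (hposdef : ∀ x : Fin ℓ → ℝ, x ≠ 0 → 0 < x ⬝ᵥ (D * C + (D * C)ᵀ).mulVec x) :
    (∀ μ : ℝ, (∃ v : Fin ℓ → ℝ, v ≠ 0 ∧ C.mulVec v = μ • v) → 0 < μ) ∧
      C.det ≠ 0 := by
  have key : ∀ μ : ℝ, (∃ v : Fin ℓ → ℝ, v ≠ 0 ∧ C.mulVec v = μ • v) → 0 < μ := by
    rintro μ ⟨v, hv, hCv⟩
    have hq : 0 < v ⬝ᵥ (D * C + (D * C)ᵀ).mulVec v := hposdef v hv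
    have hDsum : v ⬝ᵥ D.mulVec v = ∑ i, D i i * v i ^ 2 := by
      unfold dotProduct Matrix.mulVec
      refine Finset.sum_congr rfl fun i _ => ?_
      have : (dotProduct (fun j => D i j) v) = D i i * v i := by
        unfold dotProduct
        rw [Finset.sum_eq_single i]
        · intro b _ hb; simp only []; rw [hDdiag i b (Ne.symm hb), zero_mul]
        · intro h; exact absurd (Finset.mem_univ i) h
      rw [this]; ring
    have hDv : 0 < v ⬝ᵥ D.mulVec v := by
      rw [hDsum]
      obtain ⟨i, hi⟩ : ∃ i, v i ≠ 0 := Function.ne_iff.mp hv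
      refine Finset.sum_pos' (fun j _ => ?_) ⟨i, Finset.mem_univ i, ?_⟩
      · exact mul_nonneg (hDpos j).le (sq_nonneg _)
      · have := hDpos i
        have : 0 < v i ^ 2 := by positivity
        exact mul_pos (hDpos i) this
    have h1 : v ⬝ᵥ (D * C + (D * C)ᵀ).mulVec v = 2 * (μ * (v ⬝ᵥ D.mulVec v)) := by
      have hmv : (D * C).mulVec v = μ • D.mulVec v := by
        rw [← Matrix.mulVec_mulVec, hCv, Matrix.mulVec_smul]
      have htr : v ⬝ᵥ ((D * C)ᵀ).mulVec v = v ⬝ᵥ (D * C).mulVec v := by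
        rw [Matrix.mulVec_transpose, Matrix.dotProduct_mulVec,
          dotProduct_comm]
      rw [Matrix.add_mulVec, dotProduct_add, htr, hmv,
        dotProduct_smul, smul_eq_mul]
      ring
    rw [h1] at hq
    nlinarith
  refine ⟨key, fun hdet => ?_⟩
  obtain ⟨v, hv0, hv⟩ := Matrix.exists_mulVec_eq_zero_iff.mpr hdet
  have : (0:ℝ) < 0 := key 0 ⟨v, hv0, by simp [hv]⟩
  exact lt_irrefl _ this
end

section
/- Let C̃ ∈ Z^{(ℓ+1)×(ℓ+1)} and let δ ∈ Z^{ℓ+1} be a primitive vector (gcd of entries equal to 1) with C̃δ = 0. Then the cokernel of C̃ᵗ: Z^{ℓ+1} → Z^{ℓ+1} is isomorphic as an abelian group to Z ⊕ (δ^⊥ / im(C̃ᵗ)), where δ^⊥ = {x ∈ Z^{ℓ+1} : x·δ = 0}. -/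
open scoped Matrix

/-- The linear map `x ↦ x ⬝ᵥ δ` on `ℤ^n`. -/
def dotWith {n : ℕ} (δ : Fin n → ℤ) : (Fin n → ℤ) →ₗ[ℤ] ℤ where
  toFun x := x ⬝ᵥ δ
  map_add' x y := by simp [add_dotProduct]
  map_smul' c x := by simpa using smul_dotProduct c x δ

/-- If `C̃δ = 0` for a primitive integer vector `δ`, then
`coker(C̃ᵗ) ≅ ℤ ⊕ (δ^⊥ / im(C̃ᵗ))`. -/
theorem coker_iso_int_prod_perp_quotient
    {ℓ : ℕ} (Ct : Matrix (Fin (ℓ + 1)) (Fin (ℓ + 1)) ℤ)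
    (δ : Fin (ℓ + 1) → ℤ)
    (hnull : Ct.mulVec δ = 0)
    (hprim : Finset.univ.gcd δ = 1) :
    Nonempty (((Fin (ℓ + 1) → ℤ) ⧸ LinearMap.range (Matrix.mulVecLin Ctᵀ)) ≃+
      (ℤ × ((LinearMap.ker (dotWith δ)) ⧸
        Submodule.comap (LinearMap.ker (dotWith δ)).subtype
          (LinearMap.range (Matrix.mulVecLin Ctᵀ))))) := by
  classical
  set f : (Fin (ℓ+1) → ℤ) →ₗ[ℤ] ℤ := dotWith δ with hf
  set R : Submodule ℤ (Fin (ℓ+1) → ℤ) := LinearMap.range (Matrix.mulVecLin Ctᵀ) with hR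
  have hfapply : ∀ x, f x = x ⬝ᵥ δ := fun x => rfl
  have hRK : R ≤ LinearMap.ker f := by
    rintro _ ⟨x, rfl⟩
    simp only [LinearMap.mem_ker, hfapply, Matrix.mulVecLin_apply]
    rw [dotProduct_comm, Matrix.dotProduct_mulVec, Matrix.vecMul_transpose, hnull]
    simp
  obtain ⟨e, he⟩ : ∃ e, f e = 1 := by
    obtain ⟨d, hd⟩ := Submodule.IsPrincipal.principal (LinearMap.range f : Ideal ℤ)
    have hdvd : ∀ i, d ∣ δ i := by
      intro i
      have : δ i ∈ LinearMap.range f := by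
        refine ⟨Pi.single i 1, ?_⟩
        simp [hfapply, dotProduct, Pi.single_apply]
      rw [hd, Submodule.mem_span_singleton] at this
      obtain ⟨c, hc⟩ := this
      exact Dvd.intro_left c hc
    have hd1 : d ∣ (1 : ℤ) := hprim ▸ Finset.dvd_gcd (fun i _ => hdvd i)
    have h1 : (1 : ℤ) ∈ LinearMap.range f := by
      rw [hd, Submodule.mem_span_singleton]
      obtain ⟨c, hc⟩ := hd1
      exact ⟨c, by rw [smul_eq_mul, mul_comm, ← hc]⟩
    exact h1
  set K : Submodule ℤ (Fin (ℓ+1) → ℤ) := LinearMap.ker f with hK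
  set R' : Submodule ℤ K := Submodule.comap K.subtype R with hR'
  have hmem : ∀ m, m - f m • e ∈ K := by
    intro m
    rw [hK, LinearMap.mem_ker, map_sub, map_smul, he, smul_eq_mul, mul_one, sub_self]
  set G : (Fin (ℓ+1) → ℤ) →ₗ[ℤ] K :=
    (LinearMap.id - f.smulRight e).codRestrict K (by intro m; simpa using hmem m) with hG
  have hGval : ∀ m, (G m : Fin (ℓ+1) → ℤ) = m - f m • e := fun m => rfl
  set Φ : (Fin (ℓ+1) → ℤ) →ₗ[ℤ] ℤ × (K ⧸ R') := f.prod (R'.mkQ.comp G) with hΦ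
  have hker : R ≤ LinearMap.ker Φ := by
    intro m hm
    have hfm : f m = 0 := hRK hm
    have hGm : G m ∈ R' := by
      rw [hR', Submodule.mem_comap]
      show (G m : Fin (ℓ+1) → ℤ) ∈ R
      rw [hGval, hfm, zero_smul, sub_zero]
      exact hm
    simp only [LinearMap.mem_ker, hΦ, LinearMap.prod_apply, LinearMap.comp_apply,
      Function.prod, Prod.mk_eq_zero, hfm, true_and, Submodule.mkQ_apply]
    rwa [Submodule.Quotient.mk_eq_zero]
  set F : ((Fin (ℓ+1) → ℤ) ⧸ R) →ₗ[ℤ] ℤ × (K ⧸ R') := R.liftQ Φ hker with hF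
  set B : (ℤ × (K ⧸ R')) →ₗ[ℤ] ((Fin (ℓ+1) → ℤ) ⧸ R) :=
    (LinearMap.toSpanSingleton ℤ _ (R.mkQ e)).coprod
      (Submodule.mapQ R' R K.subtype (fun x hx => hx)) with hB
  have hFmk : ∀ m, F (R.mkQ m) = Φ m := fun m => rfl
  have hBval : ∀ (n : ℤ) (k : K), B (n, Submodule.Quotient.mk k) = R.mkQ (n • e + (k : Fin (ℓ+1) → ℤ)) := by
    intro n k
    have : B (n, Submodule.Quotient.mk k) = n • R.mkQ e + R.mkQ (k : Fin (ℓ+1) → ℤ) := by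
      simp [hB, Submodule.mapQ_apply]
    rw [this, map_add, map_smul]
  have h1 : F.comp B = LinearMap.id := by
    apply LinearMap.ext
    rintro ⟨n, q⟩
    obtain ⟨⟨k, hk⟩, rfl⟩ := R'.mkQ_surjective q
    have hfk : f k = 0 := hk
    have hGe : G (n • e + k) = ⟨k, hk⟩ := by
      apply Subtype.ext
      rw [hGval, map_add, map_smul, he, hfk, add_zero, smul_eq_mul, mul_one]
      abel
    rw [LinearMap.comp_apply, LinearMap.id_apply, Submodule.mkQ_apply, hBval, hFmk]
    refine Prod.ext ?_ ?_
    · show f (n • e + k) = n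
      rw [map_add, map_smul, he, hfk, add_zero, smul_eq_mul, mul_one]
    · show R'.mkQ (G (n • e + k)) = Submodule.Quotient.mk ⟨k, hk⟩
      rw [hGe, Submodule.mkQ_apply]
  have h2 : B.comp F = LinearMap.id := by
    apply LinearMap.ext
    intro x
    obtain ⟨m, rfl⟩ := R.mkQ_surjective x
    rw [LinearMap.comp_apply, LinearMap.id_apply, hFmk]
    have : Φ m = (f m, Submodule.Quotient.mk (G m)) := rfl
    rw [this, hBval]
    congr 1
    rw [hGval]
    abel
  exact ⟨(LinearEquiv.ofLinear F B h1 h2).toAddEquiv⟩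
end

section
/- Let C̃ ∈ Z^{(ℓ+1)×(ℓ+1)} with C̃δ = 0 for some δ ∈ Z^{ℓ+1} with δ_0 = 1, and let C be the ℓ×ℓ matrix obtained from C̃ by deleting the 0th row and 0th column. Then coker(C) ≅ Z^{ℓ+1} / (Z·e_0 + im(C̃)), where e_0 is the 0th standard basis vector. -/
/-- If `C̃δ = 0` with `δ₀ = 1` and `C` is obtained from `C̃` by deleting the `0`th
row and column, then `coker(C) ≅ ℤ^{ℓ+1} / (ℤ·e₀ + im(C̃))`. -/
theorem coker_deleted_iso
    {ℓ : ℕ} (Ct : Matrix (Fin (ℓ + 1)) (Fin (ℓ + 1)) ℤ)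
    (δ : Fin (ℓ + 1) → ℤ)
    (hnull : Ct.mulVec δ = 0)
    (hδ0 : δ 0 = 1) :
    Nonempty (((Fin ℓ → ℤ) ⧸
        LinearMap.range (Matrix.mulVecLin (Ct.submatrix Fin.succ Fin.succ))) ≃+
      ((Fin (ℓ + 1) → ℤ) ⧸
        (Submodule.span ℤ {(Pi.single (0 : Fin (ℓ + 1)) 1 : Fin (ℓ + 1) → ℤ)} ⊔
          LinearMap.range (Matrix.mulVecLin Ct)))) := by
  set C := Ct.submatrix Fin.succ Fin.succ with hC
  set R : Submodule ℤ (Fin ℓ → ℤ) := LinearMap.range (Matrix.mulVecLin C) with hR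
  set S : Submodule ℤ (Fin (ℓ + 1) → ℤ) :=
    Submodule.span ℤ {(Pi.single (0 : Fin (ℓ + 1)) 1 : Fin (ℓ + 1) → ℤ)} ⊔
      LinearMap.range (Matrix.mulVecLin Ct) with hS
  -- restriction map
  let f : (Fin (ℓ + 1) → ℤ) →ₗ[ℤ] (Fin ℓ → ℤ) := LinearMap.funLeft ℤ ℤ Fin.succ
  let g : (Fin (ℓ + 1) → ℤ) →ₗ[ℤ] ((Fin ℓ → ℤ) ⧸ R) := R.mkQ.comp f
  have hfsurj : Function.Surjective f :=
    LinearMap.funLeft_surjective_of_injective ℤ ℤ _ (Fin.succ_injective ℓ)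
  have hgsurj : Function.Surjective g :=
    (Submodule.mkQ_surjective R).comp hfsurj
  -- key computation: for any y, (Ct.mulVec y) ∘ succ ∈ range C
  have key : ∀ y : Fin (ℓ + 1) → ℤ,
      (fun i => Ct.mulVec y (Fin.succ i)) = C.mulVec (fun i => y i.succ - y 0 * δ i.succ) := by
    intro y
    funext i
    have hrow : Ct.mulVec δ (Fin.succ i) = 0 := by rw [hnull]; rfl
    simp only [Matrix.mulVec, dotProduct, Fin.sum_univ_succ, hδ0, mul_one,
      hC, Matrix.submatrix_apply] at hrow ⊢
    have : ∑ j, Ct (Fin.succ i) (Fin.succ j) * δ (Fin.succ j) = -Ct (Fin.succ i) 0 := by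
      linarith [hrow]
    calc Ct (Fin.succ i) 0 * y 0 + ∑ j, Ct (Fin.succ i) (Fin.succ j) * y (Fin.succ j)
        = ∑ j, Ct (Fin.succ i) (Fin.succ j) * y (Fin.succ j)
          - y 0 * ∑ j, Ct (Fin.succ i) (Fin.succ j) * δ (Fin.succ j) := by
          rw [this]; ring
      _ = ∑ j, Ct (Fin.succ i) (Fin.succ j) * (y (Fin.succ j) - y 0 * δ (Fin.succ j)) := by
          rw [Finset.mul_sum, ← Finset.sum_sub_distrib]
          congr 1; funext j; ring
  -- C.mulVec v = (Ct.mulVec (Fin.cases 0 v)) ∘ succ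
  have key2 : ∀ v : Fin ℓ → ℤ,
      C.mulVec v = fun i => Ct.mulVec (Fin.cases 0 v) (Fin.succ i) := by
    intro v
    funext i
    simp only [Matrix.mulVec, dotProduct, Fin.sum_univ_succ, hC, Matrix.submatrix_apply]
    simp
  have hker : LinearMap.ker g = S := by
    apply le_antisymm
    · intro x hx
      rw [LinearMap.mem_ker] at hx
      have hfx : f x ∈ R := by
        rwa [LinearMap.comp_apply, Submodule.mkQ_apply, Submodule.Quotient.mk_eq_zero] at hx
      obtain ⟨v, hv⟩ := hfx
      -- Ct.mulVec (Fin.cases 0 v) agrees with x on succ coordinates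
      set y : Fin (ℓ + 1) → ℤ := Fin.cases 0 v with hy
      have hsucc : ∀ i, Ct.mulVec y (Fin.succ i) = x (Fin.succ i) := by
        intro i
        have := congrFun (key2 v) i
        rw [← this]
        have := congrFun hv i
        simpa [f, LinearMap.funLeft] using this
      have hx_eq : x = (x 0 - Ct.mulVec y 0) • Pi.single (0 : Fin (ℓ + 1)) 1 + Ct.mulVec y := by
        funext j
        induction j using Fin.cases with
        | zero => simp
        | succ i => simp [hsucc i, Pi.single_apply, (Fin.succ_ne_zero i)]
      rw [hx_eq]
      exact Submodule.add_mem_sup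
        (Submodule.smul_mem _ _ (Submodule.mem_span_singleton_self _))
        ⟨y, rfl⟩
    · rw [hS, sup_le_iff]
      constructor
      · rw [Submodule.span_le, Set.singleton_subset_iff]
        rw [SetLike.mem_coe, LinearMap.mem_ker]
        have : f (Pi.single (0 : Fin (ℓ + 1)) 1) = 0 := by
          funext i
          simp [f, LinearMap.funLeft, Pi.single_apply, (Fin.succ_ne_zero i).symm]
        simp [g, this]
      · rintro _ ⟨y, rfl⟩
        rw [LinearMap.mem_ker, LinearMap.comp_apply, Submodule.mkQ_apply, Submodule.Quotient.mk_eq_zero]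
        refine ⟨fun i => y i.succ - y 0 * δ i.succ, ?_⟩
        have : f (Matrix.mulVecLin Ct y) = fun i => Ct.mulVec y (Fin.succ i) := rfl
        rw [this, key y]
        rfl
  exact ⟨((LinearMap.quotKerEquivOfSurjective g hgsurj).symm.trans
    (Submodule.quotEquivOfEq _ _ hker)).toAddEquiv⟩
end

section
/- Let C̃ ∈ Z^{(ℓ+1)×(ℓ+1)} with C̃δ = 0 and C̃ᵗγ = 0 for integer vectors δ, γ with δ_0 = γ_0 = 1, and let C be obtained from C̃ by deleting the 0th row and column. Then coker(C̃ᵗ) ≅ Z ⊕ coker(Cᵗ) as abelian groups. -/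
open scoped Matrix

/-- If `C̃δ = 0` and `C̃ᵗγ = 0` with `δ₀ = γ₀ = 1`, and `C` is obtained from `C̃`
by deleting the `0`th row and column, then `coker(C̃ᵗ) ≅ ℤ ⊕ coker(Cᵗ)`. -/
theorem coker_transpose_iso_int_prod_coker
    {ℓ : ℕ} (Ct : Matrix (Fin (ℓ + 1)) (Fin (ℓ + 1)) ℤ)
    (δ γ : Fin (ℓ + 1) → ℤ)
    (hδ : Ct.mulVec δ = 0)
    (hγ : Ctᵀ.mulVec γ = 0)
    (hδ0 : δ 0 = 1) (hγ0 : γ 0 = 1) :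
    Nonempty (((Fin (ℓ + 1) → ℤ) ⧸ LinearMap.range (Matrix.mulVecLin Ctᵀ)) ≃+
      (ℤ × ((Fin ℓ → ℤ) ⧸
        LinearMap.range (Matrix.mulVecLin (Ct.submatrix Fin.succ Fin.succ)ᵀ)))) := by
  classical
  set M : Matrix (Fin (ℓ+1)) (Fin (ℓ+1)) ℤ := Ctᵀ with hM
  set Nm : Matrix (Fin ℓ) (Fin ℓ) ℤ := (Ct.submatrix Fin.succ Fin.succ)ᵀ with hNm
  have hNM : ∀ i k, Nm i k = M i.succ k.succ := by
    intro i k; simp [hNm, hM, Matrix.transpose_apply]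
  have hδcol : ∀ a, ∑ j, δ j * M j a = 0 := by
    intro a
    have h := congrFun hδ a
    simp only [Matrix.mulVec, dotProduct, Pi.zero_apply] at h
    rw [← h]
    exact Finset.sum_congr rfl fun j _ => by simp [hM, mul_comm]
  have hγrow : ∀ a, ∑ j, M a j * γ j = 0 := by
    intro a
    have h := congrFun hγ a
    simpa [Matrix.mulVec, dotProduct, hM] using h
  set RM := LinearMap.range (Matrix.mulVecLin M) with hRM
  set RN := LinearMap.range (Matrix.mulVecLin Nm) with hRN
  -- the forward map
  set f₁ : (Fin (ℓ+1) → ℤ) →ₗ[ℤ] ℤ := ∑ j, δ j • LinearMap.proj j with hf₁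
  have f₁_apply : ∀ x, f₁ x = ∑ j, δ j * x j := by
    intro x; simp [hf₁]
  set f₂ : (Fin (ℓ+1) → ℤ) →ₗ[ℤ] (Fin ℓ → ℤ) := LinearMap.funLeft ℤ ℤ Fin.succ with hf₂
  set f : (Fin (ℓ+1) → ℤ) →ₗ[ℤ] ℤ × ((Fin ℓ → ℤ) ⧸ RN) :=
    f₁.prod ((RN.mkQ).comp f₂) with hf
  have hfle : RM ≤ LinearMap.ker f := by
    rintro x ⟨u, rfl⟩
    simp only [LinearMap.mem_ker, hf, LinearMap.prod_apply, Function.prod, LinearMap.comp_apply,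
      Prod.mk_eq_zero]
    constructor
    · rw [f₁_apply]
      have h1 : ∑ j, δ j * (Matrix.mulVecLin M u) j
          = ∑ a, (∑ j, δ j * M j a) * u a := by
        simp only [Matrix.mulVecLin_apply, Matrix.mulVec, dotProduct]
        simp_rw [Finset.mul_sum, Finset.sum_mul, mul_assoc]
        exact Finset.sum_comm
      rw [h1]
      simp [hδcol]
    · rw [Submodule.mkQ_apply, Submodule.Quotient.mk_eq_zero]
      refine ⟨fun k : Fin ℓ => u k.succ - γ k.succ * u 0, funext fun i => ?_⟩
      have hsum : ∑ k : Fin ℓ, M i.succ k.succ * γ k.succ = -(M i.succ 0) := by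
        have h := hγrow i.succ
        rw [Fin.sum_univ_succ, hγ0] at h
        linarith
      show ∑ k : Fin ℓ, Nm i k * (u k.succ - γ k.succ * u 0) = (Matrix.mulVecLin M u) i.succ
      have h2 : (Matrix.mulVecLin M u) i.succ
          = M i.succ 0 * u 0 + ∑ k : Fin ℓ, M i.succ k.succ * u k.succ := by
        simp [Matrix.mulVecLin_apply, Matrix.mulVec, dotProduct, Fin.sum_univ_succ]
      rw [h2]
      simp_rw [hNM, mul_sub, ← mul_assoc]
      rw [Finset.sum_sub_distrib, ← Finset.sum_mul, hsum]
      ring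
  set fbar := RM.liftQ f hfle with hfbar
  -- the inverse map
  set g₁ : ℤ →ₗ[ℤ] ((Fin (ℓ+1) → ℤ) ⧸ RM) :=
    (RM.mkQ).comp (LinearMap.single ℤ (fun _ => ℤ) 0) with hg₁
  set h₀ : (Fin ℓ → ℤ) →ₗ[ℤ] ℤ := -∑ j, δ j.succ • LinearMap.proj j with hh₀
  have h₀_apply : ∀ z, h₀ z = -∑ j, δ j.succ * z j := by
    intro z; simp [hh₀]
  set hcons : (Fin ℓ → ℤ) →ₗ[ℤ] (Fin (ℓ+1) → ℤ) :=
    LinearMap.pi (fun i => Fin.cases h₀ (fun j => LinearMap.proj j) i) with hhcons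
  have hcons_zero : ∀ z, hcons z 0 = h₀ z := by intro z; simp [hhcons]
  have hcons_succ : ∀ z j, hcons z j.succ = z j := by intro z j; simp [hhcons]
  have hgle : RN ≤ LinearMap.ker ((RM.mkQ).comp hcons) := by
    rintro z ⟨w, rfl⟩
    simp only [LinearMap.mem_ker, LinearMap.comp_apply, Submodule.mkQ_apply,
      Submodule.Quotient.mk_eq_zero]
    refine ⟨Fin.cons 0 w, funext fun i => ?_⟩
    induction i using Fin.cases with
    | zero =>
      have h3 : (Matrix.mulVecLin M (Fin.cons 0 w)) 0 = ∑ k : Fin ℓ, M 0 k.succ * w k := by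
        simp [Matrix.mulVecLin_apply, Matrix.mulVec, dotProduct, Fin.sum_univ_succ]
      rw [h3, hcons_zero, h₀_apply]
      have hrow : ∀ k : Fin ℓ, M 0 k.succ = -∑ j : Fin ℓ, δ j.succ * M j.succ k.succ := by
        intro k
        have h := hδcol k.succ
        rw [Fin.sum_univ_succ, hδ0, one_mul] at h
        linarith
      calc ∑ k : Fin ℓ, M 0 k.succ * w k
          = ∑ k, (-∑ j : Fin ℓ, δ j.succ * M j.succ k.succ) * w k := by
            exact Finset.sum_congr rfl fun k _ => by rw [hrow k]
        _ = -∑ j, δ j.succ * (Matrix.mulVecLin Nm w) j := by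
            simp only [Matrix.mulVecLin_apply, Matrix.mulVec, dotProduct]
            simp_rw [neg_mul, Finset.sum_neg_distrib, Finset.sum_mul, Finset.mul_sum,
              mul_assoc, hNM]
            rw [Finset.sum_comm]
    | succ i =>
      rw [hcons_succ]
      simp only [Matrix.mulVecLin_apply, Matrix.mulVec, dotProduct]
      rw [Fin.sum_univ_succ]
      simp [hNM, Fin.cons_zero, Fin.cons_succ]
  set g₂ := RN.liftQ ((RM.mkQ).comp hcons) hgle with hg₂
  set gbar := LinearMap.coprod g₁ g₂ with hgbar
  -- they are mutually inverse
  have hgf : gbar.comp fbar = LinearMap.id := by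
    apply LinearMap.ext
    intro q
    obtain ⟨x, rfl⟩ := Submodule.Quotient.mk_surjective RM q
    have : fbar (Submodule.Quotient.mk x) = f x := Submodule.liftQ_apply RM f x
    simp only [LinearMap.comp_apply, LinearMap.id_apply, this, hf, LinearMap.prod_apply,
      Function.prod, hgbar, LinearMap.coprod_apply, hg₂, hg₁]
    rw [Submodule.mkQ_apply, Submodule.mkQ_apply, Submodule.liftQ_apply,
      LinearMap.comp_apply, Submodule.mkQ_apply, ← Submodule.Quotient.mk_add]
    congr 1
    funext i
    induction i using Fin.cases with
    | zero =>
      simp only [Pi.add_apply]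
      rw [hcons_zero, h₀_apply, f₁_apply]
      have : (LinearMap.single ℤ (fun _ => ℤ) (0 : Fin (ℓ+1))) (f₁ x) 0 = f₁ x := by
        simp [LinearMap.single_apply]
      simp only [LinearMap.single_apply, Pi.single_eq_same, f₁_apply, hf₂,
        LinearMap.funLeft_apply]
      rw [Fin.sum_univ_succ, hδ0, one_mul]
      ring
    | succ i =>
      simp only [Pi.add_apply, LinearMap.single_apply]
      rw [Pi.single_eq_of_ne (Fin.succ_ne_zero i), hcons_succ]
      simp [hf₂]
  have hfg : fbar.comp gbar = LinearMap.id := by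
    apply LinearMap.ext
    rintro ⟨a, q⟩
    obtain ⟨z, rfl⟩ := Submodule.Quotient.mk_surjective RN q
    simp only [LinearMap.comp_apply, LinearMap.id_apply, hgbar, LinearMap.coprod_apply,
      hg₁, hg₂]
    rw [Submodule.liftQ_apply, LinearMap.comp_apply, Submodule.mkQ_apply,
      Submodule.mkQ_apply, ← Submodule.Quotient.mk_add, hfbar, Submodule.liftQ_apply]
    have hv0 : (LinearMap.single ℤ (fun _ => ℤ) (0:Fin (ℓ+1)) a + hcons z) 0 = a + h₀ z := by
      simp [LinearMap.single_apply, hcons_zero]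
    have hvs : ∀ j : Fin ℓ,
        (LinearMap.single ℤ (fun _ => ℤ) (0:Fin (ℓ+1)) a + hcons z) j.succ = z j := by
      intro j
      simp [LinearMap.single_apply, Pi.single_eq_of_ne (Fin.succ_ne_zero j), hcons_succ]
    simp only [hf, LinearMap.prod_apply, Function.prod, LinearMap.comp_apply, Submodule.mkQ_apply]
    refine Prod.ext ?_ ?_
    · show f₁ _ = a
      rw [f₁_apply, Fin.sum_univ_succ, hδ0, one_mul, hv0, h₀_apply]
      have : ∀ j : Fin ℓ, δ j.succ * (LinearMap.single ℤ (fun _ => ℤ) (0:Fin (ℓ+1)) a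
          + hcons z) j.succ = δ j.succ * z j := fun j => by rw [hvs j]
      rw [Finset.sum_congr rfl fun j _ => this j]
      ring
    · show Submodule.Quotient.mk (f₂ _) = Submodule.Quotient.mk z
      congr 1
      funext j
      simp only [hf₂, LinearMap.funLeft_apply]
      exact hvs j
  exact ⟨(LinearEquiv.ofLinear fbar gbar hfg hgf).toAddEquiv⟩
end

section
/- Let G = Z/mZ with m ≥ 3 and γ: G ↪ SL_2(C) the faithful representation sending a generator to diag(ω_m, ω_m⁻¹) where ω_m = e^{2πi/m}. Then the quotient ring R(γ) = Z[x]/⟨x^m − 1, x^{m−1} + x − 2⟩ is isomorphic to Z[u]/⟨u², mu⟩, and in particular its degree-zero ideal I(γ) is isomorphic as an abelian group to Z/mZ. -/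
open Polynomial Ideal Finset

namespace CyclicRepAux

noncomputable def α : ℤ[X] ≃+* ℤ[X] := (Polynomial.algEquivAevalXAddC (-1 : ℤ)).toRingEquiv

lemma α_X : α (X : ℤ[X]) = X - 1 := by
  simp [α, algEquivAevalXAddC, sub_eq_add_neg]

noncomputable def g (n : ℕ) : ℤ[X] := ∑ i ∈ range n, ∑ j ∈ range i, X ^ j

lemma key2 (n : ℕ) :
    (X : ℤ[X]) ^ (n + 2) + X - 2
      = g (n + 2) * (X - 1) ^ 2 + ((n + 3 : ℕ) : ℤ[X]) * (X - 1) := by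
  have h1 : ((X : ℤ[X]) - 1) * g (n + 2)
      = (∑ i ∈ range (n + 2), X ^ i) - ((n + 2 : ℕ) : ℤ[X]) := by
    rw [g, mul_sum]
    calc ∑ i ∈ range (n + 2), ((X : ℤ[X]) - 1) * ∑ j ∈ range i, X ^ j
        = ∑ i ∈ range (n + 2), ((X : ℤ[X]) ^ i - 1) := by
          refine sum_congr rfl fun i _ => ?_
          rw [mul_comm, geom_sum_mul]
      _ = _ := by
          rw [sum_sub_distrib, sum_const, card_range]
          simp
  have hgs := geom_sum_mul (X : ℤ[X]) (n + 2)
  push_cast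
  push_cast at h1
  linear_combination -hgs - (X - 1) * h1

lemma hpow (n : ℕ) : (X : ℤ[X]) ^ (n + 3) = X ^ (n + 2) * X := by ring

lemma ideal_eq (n : ℕ) :
    Ideal.span {(X : ℤ[X]) ^ (n + 3) - 1, X ^ (n + 2) + X - 2}
      = Ideal.span {((X : ℤ[X]) - 1) ^ 2, ((n + 3 : ℕ) : ℤ[X]) * (X - 1)} := by
  have hk := key2 n
  have hp := hpow n
  apply le_antisymm <;> rw [Ideal.span_le] <;> intro p hp' <;>
    simp only [Set.mem_insert_iff, Set.mem_singleton_iff] at hp' <;>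
    rcases hp' with rfl | rfl <;> rw [SetLike.mem_coe, Ideal.mem_span_pair]
  · exact ⟨X * g (n + 2) - 1, X, by linear_combination (-(X : ℤ[X])) * hk - hp⟩
  · exact ⟨g (n + 2), 1, by linear_combination -hk⟩
  · exact ⟨-1, X, by linear_combination -hp⟩
  · exact ⟨g (n + 2), 1 - X * g (n + 2), by linear_combination hk + g (n + 2) * hp⟩

lemma map_α (n : ℕ) :
    Ideal.map (α : ℤ[X] →+* ℤ[X])
        (Ideal.span {(X : ℤ[X]) ^ 2, ((n + 3 : ℕ) : ℤ[X]) * X})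
      = Ideal.span {((X : ℤ[X]) - 1) ^ 2, ((n + 3 : ℕ) : ℤ[X]) * (X - 1)} := by
  rw [Ideal.map_span, Set.image_insert_eq, Set.image_singleton]
  simp [map_pow, _root_.map_mul, α_X, map_natCast, map_ofNat]

lemma mem_iff (M : ℕ) (c : ℤ) :
    C c * X ∈ Ideal.span {(X : ℤ[X]) ^ 2, (M : ℤ[X]) * X} ↔ (M : ℤ) ∣ c := by
  have hM : ((M : ℕ) : ℤ[X]) = C (M : ℤ) := by simp
  constructor
  · intro h
    rw [Ideal.mem_span_pair] at h
    obtain ⟨a, b, hab⟩ := h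
    have hX : (a * X + C (M : ℤ) * b) * X = C c * X := by
      linear_combination hab - b * X * hM
    have h1 := congrArg (fun p => Polynomial.coeff p (0 + 1)) hX
    simp only [coeff_mul_X, coeff_add, coeff_C_mul, coeff_mul_X_zero, coeff_C, zero_add] at h1
    rw [if_pos trivial] at h1
    exact ⟨b.coeff 0, h1.symm⟩
  · rintro ⟨d, rfl⟩
    rw [Ideal.mem_span_pair]
    exact ⟨0, C d, by rw [hM, C_mul]; ring⟩


lemma smul_mk_X (M : ℕ) (c : ℤ) :
    c • (Ideal.Quotient.mk (Ideal.span {(X : ℤ[X]) ^ 2, (M : ℤ[X]) * X}) X)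
      = Ideal.Quotient.mk (Ideal.span {(X : ℤ[X]) ^ 2, (M : ℤ[X]) * X}) (C c * X) := by
  have h : (C c : ℤ[X]) = (c : ℤ[X]) := C_eq_intCast c
  rw [h, _root_.map_mul, map_intCast, zsmul_eq_mul]

lemma B1 (M : ℕ) (c : ℤ) :
    c • (Ideal.Quotient.mk (Ideal.span {(X : ℤ[X]) ^ 2, (M : ℤ[X]) * X}) X) = 0
      ↔ (M : ℤ) ∣ c := by
  rw [smul_mk_X, Ideal.Quotient.eq_zero_iff_mem, mem_iff]

lemma B2 (M : ℕ) (p : ℤ[X] ⧸ Ideal.span {(X : ℤ[X]) ^ 2, (M : ℤ[X]) * X}) :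
    ∃ c : ℤ, p * Ideal.Quotient.mk (Ideal.span {(X : ℤ[X]) ^ 2, (M : ℤ[X]) * X}) X
      = c • Ideal.Quotient.mk (Ideal.span {(X : ℤ[X]) ^ 2, (M : ℤ[X]) * X}) X := by
  obtain ⟨q, rfl⟩ := Ideal.Quotient.mk_surjective p
  refine ⟨q.coeff 0, ?_⟩
  rw [smul_mk_X, ← _root_.map_mul, Ideal.Quotient.mk_eq_mk_iff_sub_mem]
  rw [Ideal.mem_span_pair]
  exact ⟨q.divX, 0, by linear_combination X * X_mul_divX_add q⟩

end CyclicRepAux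

open CyclicRepAux in
/-- For the cyclic group of order `m ≥ 3` embedded in `SL₂(ℂ)`, the quotient ring
`R(γ) = ℤ[x]/⟨x^m − 1, x^{m−1} + x − 2⟩` is isomorphic to `ℤ[u]/⟨u², mu⟩`, and
its degree-zero ideal `I(γ)` (generated by the class of `x − 1`) is isomorphic
as an abelian group to `ℤ/mℤ`. -/
theorem cyclic_representation_ring_structure (m : ℕ) (hm : 3 ≤ m) :
    Nonempty ((ℤ[X] ⧸ Ideal.span {(X : ℤ[X]) ^ m - 1, X ^ (m - 1) + X - 2}) ≃+*
        (ℤ[X] ⧸ Ideal.span {(X : ℤ[X]) ^ 2, (m : ℤ[X]) * X})) ∧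
      Nonempty ((Ideal.span
          {Ideal.Quotient.mk (Ideal.span {(X : ℤ[X]) ^ m - 1, X ^ (m - 1) + X - 2})
            (X - 1)} :
          Ideal (ℤ[X] ⧸ Ideal.span {(X : ℤ[X]) ^ m - 1, X ^ (m - 1) + X - 2})) ≃+
        ZMod m) := by
  obtain ⟨n, rfl⟩ : ∃ n, m = n + 3 := ⟨m - 3, by omega⟩
  set I : Ideal ℤ[X] := Ideal.span {(X : ℤ[X]) ^ 2, ((n + 3 : ℕ) : ℤ[X]) * X} with hI
  set J : Ideal ℤ[X] := Ideal.span {(X : ℤ[X]) ^ (n + 3) - 1, X ^ (n + 2) + X - 2} with hJ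
  have hIJ : J = Ideal.map (α : ℤ[X] →+* ℤ[X]) I := by
    rw [hI, hJ, map_α n, ideal_eq n]
  let e : (ℤ[X] ⧸ I) ≃+* (ℤ[X] ⧸ J) := Ideal.quotientEquiv I J α hIJ
  constructor
  · exact ⟨e.symm⟩
  · -- the ideal part
    set t : ℤ[X] ⧸ I := Ideal.Quotient.mk I X with ht
    set y : ℤ[X] ⧸ J := Ideal.Quotient.mk J (X - 1) with hy
    have het : e t = y := by
      rw [ht, hy, Ideal.quotientEquiv_mk, α_X]
    have hymem : y ∈ Ideal.span {y} := Ideal.subset_span rfl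
    have hsmul : ∀ c : ℤ, c • y = 0 ↔ ((n + 3 : ℕ) : ℤ) ∣ c := by
      intro c
      rw [← het, ← map_zsmul e, EmbeddingLike.map_eq_zero_iff, ht, B1]
    have hsurj : ∀ a ∈ Ideal.span {y}, ∃ c : ℤ, a = c • y := by
      intro a ha
      rw [Ideal.mem_span_singleton] at ha
      obtain ⟨r, rfl⟩ := ha
      obtain ⟨s, hs⟩ := e.surjective r
      obtain ⟨c, hc⟩ := B2 (n + 3) s
      refine ⟨c, ?_⟩
      rw [← hs, ← het, ← _root_.map_mul, mul_comm, hc, map_zsmul, het]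
    refine ⟨?_⟩
    let f0 : ℤ →+ ↥(Ideal.span {y}) :=
      { toFun := fun c => ⟨c • y, zsmul_mem hymem c⟩
        map_zero' := Subtype.ext (zero_zsmul y)
        map_add' := fun a b => Subtype.ext (add_zsmul y a b) }
    have hf0 : f0 ((n + 3 : ℕ) : ℤ) = 0 :=
      Subtype.ext ((hsmul _).mpr dvd_rfl)
    let φ : ZMod (n + 3) →+ ↥(Ideal.span {y}) := ZMod.lift (n + 3) ⟨f0, hf0⟩
    have hφ : Function.Bijective φ := by
      constructor
      · rw [injective_iff_map_eq_zero]
        intro z hz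
        obtain ⟨c, rfl⟩ := ZMod.intCast_surjective z
        rw [ZMod.lift_coe] at hz
        have h0 : c • y = 0 := congrArg Subtype.val hz
        rw [ZMod.intCast_zmod_eq_zero_iff_dvd]
        exact_mod_cast (hsmul c).mp h0
      · rintro ⟨a, ha⟩
        obtain ⟨c, rfl⟩ := hsurj a ha
        exact ⟨(c : ZMod (n + 3)), by rw [ZMod.lift_coe]; rfl⟩
    exact (AddEquiv.ofBijective φ hφ).symm
end
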